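/- arXiv:1704.06948 — 8 statements merged into one kernel-verified Lean document; each statement's English description precedes it below -/
import Mathlib

section
/- Let A and C be maximally monotone operators on a real Hilbert space H and γ > 0. Then J_{γC}(z) is a zero of A + C whenever z is a fixed point of the Douglas–Rachford operator T = (1/2)(R_{γA}R_{γC} + Id), where R_{γA} = 2J_{γA} − Id; conversely, every zero of A + C is the image under J_{γC} of some fixed point of T. -/
open RealInnerProductSpace

def IsMonotoneOp {H : Type*} [NormedAddCommGroup H] [InnerProductSpace ℝ H]
    (A : H → Set H) : Prop :=
  ∀ ⦃x u y v⦄, u ∈ A x → v ∈ A y → 0 ≤ ⟪u - v, x - y⟫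

def IsMaxMonotoneOp {H : Type*} [NormedAddCommGroup H] [InnerProductSpace ℝ H]
    (A : H → Set H) : Prop :=
  IsMonotoneOp A ∧ ∀ x u, (∀ y v, v ∈ A y → 0 ≤ ⟪u - v, x - y⟫) → u ∈ A x

/-- J_{γC}(fix T) = zer(A + C) for the Douglas–Rachford operator
`T = (1/2)(R_{γA}R_{γC} + Id)`. -/
theorem douglas_rachford_fixed_points
    {H : Type*} [NormedAddCommGroup H] [InnerProductSpace ℝ H] [CompleteSpace H]
    (A C : H → Set H) (γ : ℝ) (hγ : 0 < γ)
    (hA : IsMaxMonotoneOp A) (hC : IsMaxMonotoneOp C)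
    (JA JC : H → H)
    (hJA : ∀ p q, JA p = q ↔ ∃ a ∈ A q, p = q + γ • a)
    (hJC : ∀ p q, JC p = q ↔ ∃ c ∈ C q, p = q + γ • c)
    (RA RC T : H → H)
    (hRA : ∀ z, RA z = 2 • JA z - z)
    (hRC : ∀ z, RC z = 2 • JC z - z)
    (hT : ∀ z, T z = (1 / 2 : ℝ) • (RA (RC z) + z)) :
    (∀ z, T z = z → ∃ u ∈ A (JC z), -u ∈ C (JC z)) ∧
    (∀ x, (∃ u ∈ A x, -u ∈ C x) → ∃ z, T z = z ∧ JC z = x) := by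
  constructor
  · intro z hz
    set x := JC z with hx
    obtain ⟨c, hc, hzc⟩ := (hJC z x).mp rfl
    have hRCz : RC z = x - γ • c := by
      rw [hRC z, ← hx, two_nsmul, hzc]; abel
    -- from the fixed point equation, RA (RC z) = z
    have hfix : RA (RC z) = z := by
      have h := hz
      rw [hT z] at h
      have h2 := congrArg (fun v => (2 : ℝ) • v) h
      simp only [smul_smul] at h2
      norm_num at h2
      -- h2 : RA (RC z) + z = (2:ℝ) • z
      rw [two_smul] at h2
      exact add_right_cancel h2
    have hJAeq : JA (RC z) = x := by
      have h := hfix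
      rw [hRA (RC z)] at h
      have h1 : 2 • JA (RC z) = z + RC z := sub_eq_iff_eq_add.mp h
      have h2 : z + RC z = x + x := by rw [hRCz, hzc]; abel
      have h3 : (2 : ℝ) • JA (RC z) = (2 : ℝ) • x := by
        rw [two_smul, two_smul, ← two_nsmul, h1, h2]
      exact smul_right_injective H (by norm_num : (2 : ℝ) ≠ 0) h3
    obtain ⟨a, ha, hRCa⟩ := (hJA (RC z) x).mp hJAeq
    have hac : γ • a = γ • (-c) := by
      have : x + γ • a = x + γ • (-c) := by rw [← hRCa, hRCz, smul_neg]; abel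
      exact add_left_cancel this
    have hac' : a = -c := smul_right_injective H hγ.ne' hac
    refine ⟨a, ha, ?_⟩
    rw [hac', neg_neg]
    exact hc
  · rintro x ⟨u, hu, hnu⟩
    refine ⟨x + γ • (-u), ?_, (hJC _ x).mpr ⟨-u, hnu, rfl⟩⟩
    have hJCz : JC (x + γ • (-u)) = x := (hJC _ x).mpr ⟨-u, hnu, rfl⟩
    have hRCz : RC (x + γ • (-u)) = x + γ • u := by
      rw [hRC, hJCz, two_nsmul, smul_neg]; abel
    have hJAz : JA (x + γ • u) = x := (hJA _ x).mpr ⟨u, hu, rfl⟩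
    have hRAz : RA (RC (x + γ • (-u))) = x + γ • (-u) := by
      rw [hRCz, hRA, hJAz, two_nsmul, smul_neg]; abel
    rw [hT, hRAz, ← two_smul ℝ, smul_smul]
    norm_num
end

section
/- Let f : H → ℝ be convex and differentiable with L-Lipschitz gradient (L > 0). Then ∇f is (1/L)-cocoercive: ⟨∇f(x) − ∇f(y), x − y⟩ ≥ (1/L)‖∇f(x) − ∇f(y)‖² for all x, y ∈ H (Baillon–Haddad). -/
/-!
Along a segment, convexity puts `f` above its tangent planes, and the Lipschitz gradient puts it
below the quadratic models `f x + ⟪f' x, y - x⟫ + L/2 ‖y - x‖²` (the descent lemma). Comparing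
the tangent plane at `x` with the quadratic model at `y` at the point
`y - L⁻¹ (f' y - f' x)` sharpens the tangent-plane bound by `‖f' y - f' x‖² / (2L)`; adding this
sharpened inequality to its copy with `x` and `y` exchanged gives cocoercivity.
-/

open RealInnerProductSpace

section

variable {H : Type*} [NormedAddCommGroup H] [InnerProductSpace ℝ H] [CompleteSpace H]
  {f : H → ℝ} {f' : H → H} {g x y : H}

theorem HasGradientAt.hasDerivAt_comp_add_smul {v : H} {t : ℝ}
    (hf : HasGradientAt f g (x + t • v)) :
    HasDerivAt (fun s : ℝ => f (x + s • v)) ⟪g, v⟫ t := by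
  have hline : HasDerivAt (fun s : ℝ => x + s • v) v t := by
    simpa using ((hasDerivAt_id t).smul_const v).const_add x
  simpa [InnerProductSpace.toDual_apply_apply, Function.comp_def] using
    hf.hasFDerivAt.comp_hasDerivAt t hline

theorem ConvexOn.add_inner_sub_le {s : Set H} (hf : ConvexOn ℝ s f) (hx : x ∈ s) (hy : y ∈ s)
    (hg : HasGradientAt f g x) : f x + ⟪g, y - x⟫ ≤ f y := by
  have hline : ConvexOn ℝ (Set.Icc 0 1) (fun t : ℝ => f (x + t • (y - x))) := by
    have hseg : Set.Icc (0 : ℝ) 1 ⊆ AffineMap.lineMap x y ⁻¹' s :=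
      fun t ht => hf.1.lineMap_mem hx hy ht
    have hcomp : (fun t : ℝ => f (x + t • (y - x))) = f ∘ AffineMap.lineMap x y := by
      ext t
      simp [AffineMap.lineMap_apply_module', add_comm]
    rw [hcomp]
    exact (hf.comp_affineMap _).subset hseg (convex_Icc 0 1)
  have hderiv := (show HasGradientAt f g (x + (0 : ℝ) • (y - x)) by simpa using hg)
    |>.hasDerivAt_comp_add_smul
  have := hline.le_slope_of_hasDerivAt (by simp) (by simp) zero_lt_one hderiv
  simp only [slope_def_field] at this
  simpa [le_sub_iff_add_le'] using this

theorem apply_le_add_inner_add_sq_of_gradient_lipschitz {L : ℝ}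
    (hf : ∀ x, HasGradientAt f (f' x) x) (hlip : ∀ x y, ‖f' x - f' y‖ ≤ L * ‖x - y‖)
    (x y : H) : f y ≤ f x + ⟪f' x, y - x⟫ + L / 2 * ‖y - x‖ ^ 2 := by
  set v := y - x
  -- The deviation of `f` from its quadratic upper model along the segment is antitone.
  set ψ : ℝ → ℝ := fun t => f (x + t • v) - t * ⟪f' x, v⟫ - L / 2 * t ^ 2 * ‖v‖ ^ 2
  have hψ : ∀ t, HasDerivAt ψ (⟪f' (x + t • v) - f' x, v⟫ - L * t * ‖v‖ ^ 2) t := by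
    intro t
    have hquad := ((hasDerivAt_pow 2 t).const_mul (L / 2)).mul_const (‖v‖ ^ 2)
    refine (((hf (x + t • v)).hasDerivAt_comp_add_smul.sub
      ((hasDerivAt_id t).mul_const ⟪f' x, v⟫)).sub hquad).congr_deriv ?_
    simp only [inner_sub_left, one_mul]
    ring
  have hψ_nonpos : ∀ t ∈ interior (Set.Icc (0 : ℝ) 1),
      ⟪f' (x + t • v) - f' x, v⟫ - L * t * ‖v‖ ^ 2 ≤ 0 := by
    intro t ht
    rw [interior_Icc] at ht
    have hstep : ‖f' (x + t • v) - f' x‖ ≤ L * (t * ‖v‖) := by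
      simpa [norm_smul, abs_of_pos ht.1] using hlip (x + t • v) x
    refine sub_nonpos.2 ?_
    calc ⟪f' (x + t • v) - f' x, v⟫ ≤ ‖f' (x + t • v) - f' x‖ * ‖v‖ := real_inner_le_norm _ _
      _ ≤ L * (t * ‖v‖) * ‖v‖ := by gcongr
      _ = L * t * ‖v‖ ^ 2 := by ring
  have hanti : AntitoneOn ψ (Set.Icc 0 1) :=
    antitoneOn_of_hasDerivWithinAt_nonpos (convex_Icc 0 1)
      (fun t _ => (hψ t).continuousAt.continuousWithinAt)
      (fun t _ => (hψ t).hasDerivWithinAt) hψ_nonpos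
  have h10 := hanti (by simp) (by simp) zero_le_one
  simp only [ψ, v, one_smul, zero_smul, add_zero, add_sub_cancel, one_pow, zero_pow two_ne_zero,
    one_mul, zero_mul, mul_zero, sub_zero] at h10
  linarith

theorem ConvexOn.add_inner_add_sq_norm_sub_gradient_le {L : ℝ} (hconv : ConvexOn ℝ Set.univ f)
    (hf : ∀ x, HasGradientAt f (f' x) x) (hlip : ∀ x y, ‖f' x - f' y‖ ≤ L * ‖x - y‖)
    (x y : H) : f x + ⟪f' x, y - x⟫ + 1 / (2 * L) * ‖f' y - f' x‖ ^ 2 ≤ f y := by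
  -- Evaluate the tangent plane at `x` and the quadratic upper model at `y` at the point
  -- `z = y - L⁻¹ (f' y - f' x)`, where the gap between the two bounds is smallest.
  set d := f' y - f' x
  set z := y - L⁻¹ • d
  have hlower : f x + ⟪f' x, z - x⟫ ≤ f z :=
    hconv.add_inner_sub_le (Set.mem_univ x) (Set.mem_univ z) (hf x)
  have hupper : f z ≤ f y + ⟪f' y, z - y⟫ + L / 2 * ‖z - y‖ ^ 2 :=
    apply_le_add_inner_add_sq_of_gradient_lipschitz hf hlip y z
  have hzx : ⟪f' x, z - x⟫ = ⟪f' x, y - x⟫ - L⁻¹ * ⟪f' x, d⟫ := by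
    rw [show z - x = (y - x) - L⁻¹ • d by simp only [z]; abel, inner_sub_right,
      real_inner_smul_right]
  have hzy_sub : z - y = -(L⁻¹ • d) := by simp only [z]; abel
  have hzy : ⟪f' y, z - y⟫ = -(L⁻¹ * ⟪f' y, d⟫) := by
    rw [hzy_sub, inner_neg_right, real_inner_smul_right]
  have hzy_norm : ‖z - y‖ ^ 2 = L⁻¹ ^ 2 * ‖d‖ ^ 2 := by
    rw [hzy_sub, norm_neg, norm_smul, mul_pow, Real.norm_eq_abs, sq_abs]
  have hd : ⟪f' y, d⟫ - ⟪f' x, d⟫ = ‖d‖ ^ 2 := by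
    rw [← inner_sub_left, real_inner_self_eq_norm_sq]
  have hcoeff : L⁻¹ - L / 2 * L⁻¹ ^ 2 = 1 / (2 * L) := by
    rcases eq_or_ne L 0 with rfl | hL
    · simp
    · field_simp
      ring
  rw [hzx] at hlower
  rw [hzy, hzy_norm] at hupper
  linear_combination hlower + hupper - L⁻¹ * hd - ‖d‖ ^ 2 * hcoeff

end

theorem baillon_haddad_general
    {H : Type*} [NormedAddCommGroup H] [InnerProductSpace ℝ H] [CompleteSpace H]
    (f : H → ℝ) (f' : H → H) (L : ℝ)
    (hconv : ConvexOn ℝ Set.univ f)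
    (hdiff : ∀ x, HasGradientAt f (f' x) x)
    (hlip : ∀ x y, ‖f' x - f' y‖ ≤ L * ‖x - y‖) :
    ∀ x y, ⟪f' x - f' y, x - y⟫ ≥ (1 / L) * ‖f' x - f' y‖ ^ 2 := by
  intro x y
  have hxy := hconv.add_inner_add_sq_norm_sub_gradient_le hdiff hlip x y
  have hyx := hconv.add_inner_add_sq_norm_sub_gradient_le hdiff hlip y x
  have hinner : ⟪f' x, y - x⟫ + ⟪f' y, x - y⟫ = -⟪f' x - f' y, x - y⟫ := by
    rw [inner_sub_left, ← neg_sub x y, inner_neg_right]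
    ring
  rw [norm_sub_rev] at hyx
  rw [ge_iff_le, norm_sub_rev]
  linear_combination hxy + hyx - hinner

/-- Baillon–Haddad: a convex differentiable function with
L-Lipschitz gradient has (1/L)-cocoercive gradient. -/
theorem baillon_haddad
    {H : Type*} [NormedAddCommGroup H] [InnerProductSpace ℝ H] [CompleteSpace H]
    (f : H → ℝ) (f' : H → H) (L : ℝ) (hL : 0 < L)
    (hconv : ConvexOn ℝ Set.univ f)
    (hdiff : ∀ x, HasGradientAt f (f' x) x)
    (hlip : ∀ x y, ‖f' x - f' y‖ ≤ L * ‖x - y‖) :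
    ∀ x y, ⟪f' x - f' y, x - y⟫ ≥ (1 / L) * ‖f' x - f' y‖ ^ 2 :=
  baillon_haddad_general f f' L hconv hdiff hlip
end

section
/- Let A, B, C be maximally monotone operators on H with B single-valued with full domain, and γ > 0. Then x = J_{γC}(z) is a zero of A + B + C for some fixed point z of the operator T_FDR = J_{γA}∘(2J_{γC} − Id − γB∘J_{γC}) + (Id − J_{γC}); conversely every zero of A + B + C arises this way. Equivalently, J_{γC}(fix T_FDR) = zer(A + B + C). -/
open RealInnerProductSpace

/-- `J_{γC}(fix T_FDR) = zer(A + B + C)` for the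
forward-Douglas–Rachford operator
`T_FDR = J_{γA}∘(2J_{γC} − Id − γB∘J_{γC}) + (Id − J_{γC})`. -/
theorem forward_douglas_rachford_fixed_points
    {H : Type*} [NormedAddCommGroup H] [InnerProductSpace ℝ H] [CompleteSpace H]
    (A C : H → Set H) (B : H → H) (γ : ℝ) (hγ : 0 < γ)
    (hA : IsMaxMonotoneOp A) (hC : IsMaxMonotoneOp C)
    (hBmono : ∀ x y, 0 ≤ ⟪B x - B y, x - y⟫)
    (JA JC : H → H)
    (hJA : ∀ p q, JA p = q ↔ ∃ a ∈ A q, p = q + γ • a)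
    (hJC : ∀ p q, JC p = q ↔ ∃ c ∈ C q, p = q + γ • c)
    (T : H → H)
    (hT : ∀ z, T z = JA (2 • JC z - z - γ • B (JC z)) + (z - JC z)) :
    JC '' {z | T z = z} = {x | ∃ a ∈ A x, ∃ c ∈ C x, a + B x + c = 0} := by
  ext x
  constructor
  · rintro ⟨z, hz, rfl⟩
    simp only [Set.mem_setOf_eq] at hz ⊢
    obtain ⟨c, hc, hzc⟩ := (hJC z (JC z)).mp rfl
    rw [hT z] at hz
    have hJAx : JA (2 • JC z - z - γ • B (JC z)) = JC z := by
      have := hz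
      abel_nf at this ⊢
      linear_combination (norm := abel_nf) this
    obtain ⟨a, ha, hax⟩ := (hJA _ _).mp hJAx
    refine ⟨a, ha, c, hc, ?_⟩
    have h1 : γ • (a + B (JC z) + c) = 0 := by
      rw [smul_add, smul_add]
      linear_combination (norm := module) - hax - hzc
    rcases smul_eq_zero.mp h1 with h | h
    · exact absurd h hγ.ne'
    · exact h
  · rintro ⟨a, ha, c, hc, hsum⟩
    refine ⟨x + γ • c, ?_, ?_⟩
    · have hJCz : JC (x + γ • c) = x := (hJC _ _).mpr ⟨c, hc, rfl⟩
      simp only [Set.mem_setOf_eq, hT, hJCz]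
      have hJAx : JA (2 • x - (x + γ • c) - γ • B x) = x := by
        refine (hJA _ _).mpr ⟨a, ha, ?_⟩
        have : a = -(B x + c) := by linear_combination (norm := module) hsum
        rw [this]
        module
      rw [hJAx]; abel
    · exact (hJC _ _).mpr ⟨c, hc, rfl⟩
end

section
/- With the setting of weights Wᵢ summing to Id and subspaces Hᵢ = (ker Wᵢ)^⊥, let 𝒮 = ran Σ* = {x ∈ ∏ᵢHᵢ : ∃x∈H, xᵢ = P_{Hᵢ}x for all i}. Then Σ*Σ restricted to 𝒮 is the identity on 𝒮. -/
open RealInnerProductSpace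

/-- `a - P_K a` lies in `Kᗮ = ker W`, so `W` cannot tell `a` from its projection. -/
theorem ContinuousLinearMap.apply_starProjection_of_ker_eq_orthogonal
    {H : Type*} [NormedAddCommGroup H] [InnerProductSpace ℝ H]
    (W : H →L[ℝ] H) (K : Submodule ℝ H) [K.HasOrthogonalProjection]
    (hker : LinearMap.ker (W : H →ₗ[ℝ] H) = Kᗮ) (a : H) :
    W (K.starProjection a) = W a := by
  have hmem : a - K.starProjection a ∈ LinearMap.ker (W : H →ₗ[ℝ] H) :=
    hker ▸ K.sub_starProjection_mem_orthogonal a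
  rw [LinearMap.mem_ker, ContinuousLinearMap.coe_coe, map_sub, sub_eq_zero] at hmem
  exact hmem.symm

theorem sigma_star_sigma_id_on_S_general
    {H : Type*} [NormedAddCommGroup H] [InnerProductSpace ℝ H]
    (n : ℕ) (W : Fin n → H →L[ℝ] H) (Hsub : Fin n → Submodule ℝ H)
    [∀ i, CompleteSpace (Hsub i)]
    (hker : ∀ i, LinearMap.ker (W i : H →ₗ[ℝ] H) = (Hsub i)ᗮ)
    (hsum : ∀ x : H, ∑ i, W i x = x) :
    ∀ x : Fin n → H,
      (∃ a : H, ∀ i, x i = (Submodule.orthogonalProjection (Hsub i) a : H)) →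
      ∀ i, (Submodule.orthogonalProjection (Hsub i) (∑ j, W j (x j)) : H) = x i := by
  rintro x ⟨a, ha⟩ i
  have hsum_x : ∑ j, W j (x j) = a := by
    simp_rw [ha, ← Submodule.starProjection_apply,
      (W _).apply_starProjection_of_ker_eq_orthogonal _ (hker _), hsum]
  rw [hsum_x, ha]

/-- with the same setting of weights and subspaces, Σ*Σ restricted
to 𝒮 = ran Σ* is the identity on 𝒮: for x ∈ 𝒮, Σ*(Σx) = x. -/
theorem sigma_star_sigma_id_on_S
    {H : Type*} [NormedAddCommGroup H] [InnerProductSpace ℝ H] [CompleteSpace H]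
    (n : ℕ) (W : Fin n → H →L[ℝ] H) (Hsub : Fin n → Submodule ℝ H)
    [∀ i, CompleteSpace (Hsub i)]
    (hWsa : ∀ i, IsSelfAdjoint (W i))
    (hWpos : ∀ i, ∀ x, 0 ≤ ⟪W i x, x⟫)
    (hker : ∀ i, LinearMap.ker (W i : H →ₗ[ℝ] H) = (Hsub i)ᗮ)
    (hWstrong : ∀ i, ∃ c : ℝ, 0 < c ∧ ∀ x ∈ Hsub i, c * ‖x‖ ^ 2 ≤ ⟪W i x, x⟫)
    (hsum : ∀ x : H, ∑ i, W i x = x) :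
    ∀ x : Fin n → H,
      (∃ a : H, ∀ i, x i = (Submodule.orthogonalProjection (Hsub i) a : H)) →
      ∀ i, (Submodule.orthogonalProjection (Hsub i) (∑ j, W j (x j)) : H) = x i :=
  sigma_star_sigma_id_on_S_general n W Hsub hker hsum
end

section
/- Let C : H → 2^H be maximally monotone and uniformly monotone with modulus φ, and let 𝐂 = W Σ* C Σ + N_𝒮 on 𝐇 = ∏ᵢ Hᵢ, where W(x) = (Wᵢxᵢ)ᵢ, Γ commutes with each Wᵢ, and 𝒮 = ran Σ*. Then for all x, y ∈ 𝐇 and all u ∈ W^{-1}Γ𝐂x, v ∈ W^{-1}Γ𝐂y, ⟨u − v, x − y⟩_{Γ^{-1}W} ≥ φ(‖Σx − Σy‖). -/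
open RealInnerProductSpace

/-- Membership in the diagonal-like subspace 𝒮 = ran Σ*. -/
def InS {H : Type*} [NormedAddCommGroup H] [InnerProductSpace ℝ H]
    {n : ℕ} (Hsub : Fin n → Submodule ℝ H) [∀ i, CompleteSpace (Hsub i)]
    (x : Fin n → H) : Prop :=
  ∃ a : H, ∀ i, x i = ((Hsub i).orthogonalProjectionOnto a : H)

/-- Membership in 𝐂 x = W Σ* C Σ x + N_𝒮 x. -/
def InCbold {H : Type*} [NormedAddCommGroup H] [InnerProductSpace ℝ H]
    {n : ℕ} (W : Fin n → H →L[ℝ] H) (Hsub : Fin n → Submodule ℝ H)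
    [∀ i, CompleteSpace (Hsub i)] (C : H → Set H)
    (x w : Fin n → H) : Prop :=
  ∃ c ∈ C (∑ i, W i (x i)), ∃ nv : Fin n → H,
    (InS Hsub x ∧ ∀ s : Fin n → H, InS Hsub s → ∑ i, ⟪nv i, s i⟫ = 0) ∧
    ∀ i, w i = W i (((Hsub i).orthogonalProjectionOnto c : H)) + nv i

/-!
Since `W u = Γ w` and `W v = Γ w'` with `w ∈ 𝐂 x`, `w' ∈ 𝐂 y`, the `Γ⁻¹W`-pairing of `u - v` with
`x - y` is the plain pairing `∑ ⟪w i - w' i, x i - y i⟫`. Here `x - y ∈ 𝒮`, so the normal-cone parts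
of `w, w'` drop out, and as each `W i` is symmetric with range in `Hsub i`, the remaining parts
`W i (P_{Hsub i} c)` pair with `x - y` to `⟪c - c', Σx - Σy⟫`, where `c ∈ C (Σx)`, `c' ∈ C (Σy)`.
Uniform monotonicity of `C` bounds this below by `φ ‖Σx - Σy‖`.
-/

theorem LinearMap.IsSymmetric.apply_mem_of_orthogonal_le_ker {𝕜 E : Type*} [RCLike 𝕜]
    [NormedAddCommGroup E] [InnerProductSpace 𝕜 E] {T : E →ₗ[𝕜] E} (hT : T.IsSymmetric)
    {K : Submodule 𝕜 E} [K.HasOrthogonalProjection] (hK : Kᗮ ≤ LinearMap.ker T) (z : E) :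
    T z ∈ K := by
  have hrange : LinearMap.range T ≤ K :=
    calc LinearMap.range T ≤ (LinearMap.range T)ᗮᗮ := Submodule.le_orthogonal_orthogonal _
      _ = (LinearMap.ker T)ᗮ := by rw [hT.orthogonal_range]
      _ ≤ Kᗮᗮ := Submodule.orthogonal_le hK
      _ = K := K.orthogonal_orthogonal
  exact hrange (LinearMap.mem_range_self T z)

section

variable {H : Type*} [NormedAddCommGroup H] [InnerProductSpace ℝ H]
  {n : ℕ} {W : Fin n → H →L[ℝ] H} {Hsub : Fin n → Submodule ℝ H} [∀ i, CompleteSpace (Hsub i)]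

theorem InS.sub {x y : Fin n → H} (hx : InS Hsub x) (hy : InS Hsub y) :
    InS Hsub (x - y) := by
  obtain ⟨a, ha⟩ := hx
  obtain ⟨b, hb⟩ := hy
  exact ⟨a - b, fun i => by rw [Pi.sub_apply, map_sub, Submodule.coe_sub, ← ha i, ← hb i]⟩

theorem InCbold.inS {C : H → Set H} {x w : Fin n → H} (hw : InCbold W Hsub C x w) :
    InS Hsub x := by
  obtain ⟨-, -, -, ⟨hx, -⟩, -⟩ := hw
  exact hx

theorem InCbold.exists_sum_inner_eq {C : H → Set H} {x w : Fin n → H}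
    (hWsym : ∀ i, (W i : H →ₗ[ℝ] H).IsSymmetric)
    (hker : ∀ i, (Hsub i)ᗮ ≤ LinearMap.ker (W i : H →ₗ[ℝ] H))
    (hw : InCbold W Hsub C x w) :
    ∃ c ∈ C (∑ i, W i (x i)), ∀ s : Fin n → H, InS Hsub s →
      ∑ i, ⟪w i, s i⟫ = ⟪c, ∑ i, W i (s i)⟫ := by
  obtain ⟨c, hc, nv, ⟨-, hnv⟩, hw⟩ := hw
  refine ⟨c, hc, fun s hs => ?_⟩
  have hterm : ∀ i, ⟪w i, s i⟫ = ⟪c, W i (s i)⟫ + ⟪nv i, s i⟫ := fun i => by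
    have hWs : W i (s i) ∈ Hsub i := (hWsym i).apply_mem_of_orthogonal_le_ker (hker i) (s i)
    rw [hw i, inner_add_left, ← ContinuousLinearMap.coe_coe, hWsym i,
      ContinuousLinearMap.coe_coe, ← Submodule.starProjection_apply,
      Submodule.inner_starProjection_left_eq_right, Submodule.starProjection_eq_self_iff.mpr hWs]
  rw [Finset.sum_congr rfl fun i _ => hterm i, Finset.sum_add_distrib, hnv s hs, add_zero,
    inner_sum]

theorem InCbold.le_sum_inner_sub {C : H → Set H} {φ : ℝ → ℝ}
    (hunif : ∀ x u y v, u ∈ C x → v ∈ C y → ⟪u - v, x - y⟫ ≥ φ ‖x - y‖)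
    (hWsym : ∀ i, (W i : H →ₗ[ℝ] H).IsSymmetric)
    (hker : ∀ i, (Hsub i)ᗮ ≤ LinearMap.ker (W i : H →ₗ[ℝ] H))
    {x y w w' : Fin n → H} (hw : InCbold W Hsub C x w) (hw' : InCbold W Hsub C y w') :
    φ ‖(∑ i, W i (x i)) - ∑ i, W i (y i)‖ ≤ ∑ i, ⟪w i - w' i, x i - y i⟫ := by
  have hS : InS Hsub (x - y) := hw.inS.sub hw'.inS
  obtain ⟨c, hc, hpair⟩ := hw.exists_sum_inner_eq hWsym hker
  obtain ⟨c', hc', hpair'⟩ := hw'.exists_sum_inner_eq hWsym hker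
  have hWsum : ∑ i, W i ((x - y) i) = (∑ i, W i (x i)) - ∑ i, W i (y i) := by
    simp only [Pi.sub_apply, map_sub, Finset.sum_sub_distrib]
  calc φ ‖(∑ i, W i (x i)) - ∑ i, W i (y i)‖
      ≤ ⟪c - c', (∑ i, W i (x i)) - ∑ i, W i (y i)⟫ := hunif _ _ _ _ hc hc'
    _ = ∑ i, ⟪w i, (x - y) i⟫ - ∑ i, ⟪w' i, (x - y) i⟫ := by
        rw [hpair _ hS, hpair' _ hS, hWsum, inner_sub_left]
    _ = ∑ i, ⟪w i - w' i, x i - y i⟫ := by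
        simp only [Pi.sub_apply, ← Finset.sum_sub_distrib, inner_sub_left]

end

theorem uniform_monotonicity_transfer_general
    {H : Type*} [NormedAddCommGroup H] [InnerProductSpace ℝ H] [CompleteSpace H]
    (n : ℕ) (W : Fin n → H →L[ℝ] H) (Hsub : Fin n → Submodule ℝ H)
    [∀ i, CompleteSpace (Hsub i)]
    (hWsa : ∀ i, IsSelfAdjoint (W i))
    (hker : ∀ i, LinearMap.ker (W i : H →ₗ[ℝ] H) = (Hsub i)ᗮ)
    (Γ Γinv : H →L[ℝ] H)
    (hΓinv : ∀ x, Γinv (Γ x) = x ∧ Γ (Γinv x) = x)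
    (C : H → Set H)
    (φ : ℝ → ℝ)
    (hunif : ∀ x u y v, u ∈ C x → v ∈ C y → ⟪u - v, x - y⟫ ≥ φ ‖x - y‖)
    (x y u v : Fin n → H)
    (hu : ∃ w : Fin n → H, InCbold W Hsub C x w ∧
      ∀ i, u i ∈ Hsub i ∧ W i (u i) = Γ (w i))
    (hv : ∃ w : Fin n → H, InCbold W Hsub C y w ∧
      ∀ i, v i ∈ Hsub i ∧ W i (v i) = Γ (w i)) :
    ∑ i, ⟪Γinv (W i (u i - v i)), x i - y i⟫ ≥
      φ ‖(∑ i, W i (x i)) - ∑ i, W i (y i)‖ := by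
  obtain ⟨w, hwx, hwu⟩ := hu
  obtain ⟨w', hwy, hwv⟩ := hv
  have hWsym i : (W i : H →ₗ[ℝ] H).IsSymmetric :=
    ContinuousLinearMap.isSelfAdjoint_iff_isSymmetric.mp (hWsa i)
  have hpull i : Γinv (W i (u i - v i)) = w i - w' i := by
    rw [map_sub, (hwu i).2, (hwv i).2, ← map_sub, (hΓinv _).1]
  simp only [hpull]
  exact hwx.le_sum_inner_sub hunif hWsym (fun i => (hker i).ge) hwy

/-- uniform monotonicity of C transfers to W⁻¹Γ𝐂 in the metric
⟨·,·⟩_{Γ⁻¹W}: for u ∈ W⁻¹Γ𝐂x and v ∈ W⁻¹Γ𝐂y,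
⟨u − v, x − y⟩_{Γ⁻¹W} ≥ φ(‖Σx − Σy‖). -/
theorem uniform_monotonicity_transfer
    {H : Type*} [NormedAddCommGroup H] [InnerProductSpace ℝ H] [CompleteSpace H]
    (n : ℕ) (W : Fin n → H →L[ℝ] H) (Hsub : Fin n → Submodule ℝ H)
    [∀ i, CompleteSpace (Hsub i)]
    (hWsa : ∀ i, IsSelfAdjoint (W i))
    (hWpos : ∀ i, ∀ x, 0 ≤ ⟪W i x, x⟫)
    (hker : ∀ i, LinearMap.ker (W i : H →ₗ[ℝ] H) = (Hsub i)ᗮ)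
    (hWstrong : ∀ i, ∃ c : ℝ, 0 < c ∧ ∀ x ∈ Hsub i, c * ‖x‖ ^ 2 ≤ ⟪W i x, x⟫)
    (hsum : ∀ x : H, ∑ i, W i x = x)
    (Γ Γinv : H →L[ℝ] H) (hΓsa : IsSelfAdjoint Γ)
    (hΓpos : ∃ c : ℝ, 0 < c ∧ ∀ x, c * ‖x‖ ^ 2 ≤ ⟪Γ x, x⟫)
    (hΓinv : ∀ x, Γinv (Γ x) = x ∧ Γ (Γinv x) = x)
    (hΓH : ∀ i, ∀ x ∈ Hsub i, Γ x ∈ Hsub i)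
    (hcomm : ∀ i, ∀ x, Γ (W i x) = W i (Γ x))
    (C : H → Set H) (hCmax : IsMaxMonotoneOp C)
    (φ : ℝ → ℝ)
    (hunif : ∀ x u y v, u ∈ C x → v ∈ C y → ⟪u - v, x - y⟫ ≥ φ ‖x - y‖)
    (x y u v : Fin n → H)
    (hx : ∀ i, x i ∈ Hsub i) (hy : ∀ i, y i ∈ Hsub i)
    (hu : ∃ w : Fin n → H, InCbold W Hsub C x w ∧
      ∀ i, u i ∈ Hsub i ∧ W i (u i) = Γ (w i))
    (hv : ∃ w : Fin n → H, InCbold W Hsub C y w ∧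
      ∀ i, v i ∈ Hsub i ∧ W i (v i) = Γ (w i)) :
    ∑ i, ⟪Γinv (W i (u i - v i)), x i - y i⟫ ≥
      φ ‖(∑ i, W i (x i)) - ∑ i, W i (y i)‖ :=
  uniform_monotonicity_transfer_general n W Hsub hWsa hker Γ Γinv hΓinv C φ hunif x y u v hu hv
end

section
/- In the product-space setting with weights Wᵢ, preconditioner Γ, and maximally monotone C on H, the operator W^{-1}Γ𝐂 (with 𝐂 = WΣ*CΣ + N_𝒮) is maximally monotone in 𝐇 endowed with the inner product ⟨·,·⟩_{Γ^{-1}W}, and its resolvent satisfies J_{W^{-1}Γ𝐂} = Σ* ∘ J_{ΓC} ∘ Σ. -/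
/-!
Write `Σx = ∑ᵢ Wᵢ xᵢ`. Since `Wᵢ P_{Hᵢ} = Wᵢ` and `∑ᵢ Wᵢ = Id`, a family `x ∈ 𝐇` lies in `𝒮` iff
`x = Σ*Σx`, and a family in `𝐇` is normal to `𝒮` iff it sums to `0`. Hence, for `u ∈ 𝐇`,
`u ∈ W⁻¹Γ𝐂 x` iff `x ∈ 𝒮` and `Σu ∈ ΓC(Σx)`. With this description the resolvent identity is the
definition of `J_{ΓC}`, and monotonicity is that of `C`, because
`⟨u - v, x - y⟩_{Γ⁻¹W} = ⟪Γ⁻¹(Σu - Σv), Σx - Σy⟫` for `x, y ∈ 𝒮`.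
Maximality is Minty's argument: testing `(x, u)` against the resolvent point `y = J(x + u)` gives
`‖x - y‖²_{Γ⁻¹W} ≤ 0`. The form `⟨·, ·⟩_{Γ⁻¹W}` is positive definite on `𝐇` because `Γ⁻¹Wᵢ`, a
product of commuting positive operators, is positive; this is proved with the Riesz–Nagy iteration
`B ↦ B - B²`, which for `0 ≤ B ≤ 1` gives `B = ∑_{k<m} Bₖ² + Bₘ` with `Bₘ → 0` strongly.
-/

open RealInnerProductSpace

/-- Membership in W⁻¹Γ𝐂 x. -/
def InD {H : Type*} [NormedAddCommGroup H] [InnerProductSpace ℝ H]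
    {n : ℕ} (W : Fin n → H →L[ℝ] H) (Hsub : Fin n → Submodule ℝ H)
    [∀ i, CompleteSpace (Hsub i)] (Γ : H →L[ℝ] H) (C : H → Set H)
    (x u : Fin n → H) : Prop :=
  ∃ w : Fin n → H, InCbold W Hsub C x w ∧ ∀ i, u i ∈ Hsub i ∧ W i (u i) = Γ (w i)

open scoped InnerProductSpace ComplexOrder
open Filter Topology Finset

namespace ContinuousLinearMap

variable {𝕜 E : Type*} [RCLike 𝕜] [NormedAddCommGroup E] [InnerProductSpace 𝕜 E]

lemma IsPositive.of_inverse {T S : E →L[𝕜] E} (hT : T.IsPositive) (hST : ∀ x, S (T x) = x)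
    (hTS : ∀ x, T (S x) = x) : S.IsPositive :=
  (LinearMap.IsPositive.toLinearMap_symm (T := .ofLinearMap (T : E →ₗ[𝕜] E) S
    (LinearMap.ext hTS) (LinearMap.ext hST)) hT.toLinearMap :)

def subSqSeq (B : E →L[𝕜] E) : ℕ → E →L[𝕜] E
  | 0 => B
  | k + 1 => subSqSeq B k - subSqSeq B k * subSqSeq B k

variable {A B : E →L[𝕜] E}

lemma commute_subSqSeq (h : Commute A B) : ∀ k, Commute A (subSqSeq B k)
  | 0 => h
  | k + 1 =>
    (commute_subSqSeq h k).sub_right ((commute_subSqSeq h k).mul_right (commute_subSqSeq h k))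

lemma sum_subSqSeq_mul_self_add (B : E →L[𝕜] E) (m : ℕ) :
    ∑ k ∈ range m, subSqSeq B k * subSqSeq B k + subSqSeq B m = B := by
  induction m with
  | zero => simp [subSqSeq]
  | succ m ih =>
    conv_rhs => rw [← ih]
    rw [sum_range_succ, subSqSeq]
    abel

variable [CompleteSpace E]

lemma isSelfAdjoint_subSqSeq (hB : IsSelfAdjoint B) : ∀ k, IsSelfAdjoint (subSqSeq B k)
  | 0 => hB
  | k + 1 => (isSelfAdjoint_subSqSeq hB k).sub
      (((isSelfAdjoint_subSqSeq hB k).commute_iff (isSelfAdjoint_subSqSeq hB k)).mp (.refl _))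

lemma IsPositive.conj_of_isSelfAdjoint {T S : E →L[𝕜] E} (hT : T.IsPositive)
    (hS : IsSelfAdjoint S) :
    (S * T * S).IsPositive := by
  simpa [hS.adjoint_eq, mul_def, comp_assoc] using hT.adjoint_conj S

lemma subSqSeq_mem_Icc (hB0 : 0 ≤ B) (hB1 : B ≤ 1) : ∀ k, subSqSeq B k ∈ Set.Icc 0 1
  | 0 => ⟨hB0, hB1⟩
  | k + 1 => by
    obtain ⟨h0, h1⟩ := subSqSeq_mem_Icc hB0 hB1 k
    set T := subSqSeq B k
    have hT : IsSelfAdjoint T :=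
      isSelfAdjoint_subSqSeq ((nonneg_iff_isPositive B).mp hB0).isSelfAdjoint k
    rw [le_def] at h1
    rw [nonneg_iff_isPositive] at h0
    -- `T - T² = T (1 - T) T + (1 - T) T (1 - T)` and `1 - (T - T²) = (1 - T) + T²`
    constructor
    · rw [nonneg_iff_isPositive, subSqSeq]
      have := (h1.conj_of_isSelfAdjoint hT).add
        (h0.conj_of_isSelfAdjoint ((IsSelfAdjoint.one _).sub hT))
      convert this using 1
      noncomm_ring
    · rw [le_def, subSqSeq]
      have := h1.add (isPositive_one.conj_of_isSelfAdjoint hT)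
      convert this using 1
      noncomm_ring

lemma tendsto_subSqSeq_apply (hB0 : 0 ≤ B) (hB1 : B ≤ 1) (x : E) :
    Tendsto (fun k => subSqSeq B k x) atTop (𝓝 0) := by
  have hsa k : IsSelfAdjoint (subSqSeq B k) :=
    isSelfAdjoint_subSqSeq ((nonneg_iff_isPositive B).mp hB0).isSelfAdjoint k
  have hsq k : RCLike.re ⟪(subSqSeq B k * subSqSeq B k) x, x⟫_𝕜 = ‖subSqSeq B k x‖ ^ 2 := by
    rw [mul_apply_eq_comp, ← inner_self_eq_norm_sq (𝕜 := 𝕜)]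
    exact congrArg _ ((hsa k).isSymmetric _ _)
  -- `re ⟪B x, x⟫ = ∑_{k<m} ‖Bₖ x‖² + re ⟪Bₘ x, x⟫` bounds the partial sums
  have hbdd m : ∑ k ∈ range m, ‖subSqSeq B k x‖ ^ 2 ≤ RCLike.re ⟪B x, x⟫_𝕜 := by
    conv_rhs => rw [← sum_subSqSeq_mul_self_add B m]
    simp only [add_apply, _root_.sum_apply, sum_inner, inner_add_left, map_add, map_sum, hsq]
    have := ((nonneg_iff_isPositive _).mp (subSqSeq_mem_Icc hB0 hB1 m).1).re_inner_nonneg_left x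
    linarith
  have hsum := (summable_of_sum_range_le (fun k => by positivity) hbdd).tendsto_atTop_zero
  rw [tendsto_zero_iff_norm_tendsto_zero]
  simpa using hsum.sqrt

lemma IsPositive.mul_of_commute_of_le_one (hA : A.IsPositive) (hB0 : 0 ≤ B) (hB1 : B ≤ 1)
    (h : Commute A B) : (A * B).IsPositive := by
  have hBsa := ((nonneg_iff_isPositive B).mp hB0).isSelfAdjoint
  refine (isPositive_def' (T := A * B)).mpr
    ⟨(hA.isSelfAdjoint.commute_iff hBsa).mp h, fun x => ?_⟩
  -- `A B = ∑_{k<m} Bₖ A Bₖ + A Bₘ`, and the last term vanishes in the limit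
  have hle m : RCLike.re ⟪A (subSqSeq B m x), x⟫_𝕜 ≤ (A * B).reApplyInnerSelf x := by
    have hpos : (∑ k ∈ range m, subSqSeq B k * A * subSqSeq B k).IsPositive :=
      isPositive_sum _ fun k _ => hA.conj_of_isSelfAdjoint (isSelfAdjoint_subSqSeq hBsa k)
    have hsplit : A * B = ∑ k ∈ range m, subSqSeq B k * A * subSqSeq B k + A * subSqSeq B m := by
      conv_lhs => rw [← sum_subSqSeq_mul_self_add B m]
      rw [mul_add, mul_sum]
      congr 1
      refine sum_congr rfl fun k _ => ?_
      rw [← mul_assoc, (commute_subSqSeq h k).eq]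
    have := hpos.re_inner_nonneg_left x
    rw [reApplyInnerSelf, hsplit, add_apply, inner_add_left, map_add, mul_apply_eq_comp]
    linarith
  have hlim : Tendsto (fun m => RCLike.re ⟪A (subSqSeq B m x), x⟫_𝕜) atTop (𝓝 0) := by
    have := ((A.continuous.tendsto 0).comp (tendsto_subSqSeq_apply hB0 hB1 x)).inner (𝕜 := 𝕜)
      (tendsto_const_nhds (x := x))
    simpa using! (RCLike.continuous_re.tendsto _).comp this
  exact le_of_tendsto' hlim hle

lemma le_one_of_norm_le_one (hB : IsSelfAdjoint B) (h : ‖B‖ ≤ 1) : B ≤ 1 := by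
  refine (le_def B 1).mpr (isPositive_def'.mpr ⟨(IsSelfAdjoint.one _).sub hB, fun x => ?_⟩)
  have hBx : RCLike.re ⟪B x, x⟫_𝕜 ≤ ‖x‖ ^ 2 :=
    calc RCLike.re ⟪B x, x⟫_𝕜 ≤ ‖B x‖ * ‖x‖ := re_inner_le_norm _ _
      _ ≤ ‖B‖ * ‖x‖ * ‖x‖ := by gcongr; exact B.le_opNorm x
      _ ≤ ‖x‖ ^ 2 := by nlinarith [norm_nonneg x, norm_nonneg B]
  rw [reApplyInnerSelf, sub_apply, one_apply_eq_self, inner_sub_left, map_sub,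
    inner_self_eq_norm_sq]
  linarith

theorem IsPositive.mul_of_commute (hA : A.IsPositive) (hB : B.IsPositive) (h : Commute A B) :
    (A * B).IsPositive := by
  rcases eq_or_ne B 0 with rfl | hB0
  · simp
  have hr : 0 < ‖B‖ := norm_pos_iff.mpr hB0
  set c : 𝕜 := ((‖B‖⁻¹ : ℝ) : 𝕜)
  have hc : 0 ≤ c := RCLike.ofReal_nonneg.mpr (inv_nonneg.mpr hr.le)
  have hcB : (c • B).IsPositive := hB.smul_of_nonneg hc
  have hnorm : ‖c • B‖ ≤ 1 := by
    rw [norm_smul, RCLike.norm_ofReal, abs_inv, abs_norm, inv_mul_cancel₀ hr.ne']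
  have key := hA.mul_of_commute_of_le_one ((nonneg_iff_isPositive _).mpr hcB)
    (le_one_of_norm_le_one hcB.isSelfAdjoint hnorm) (h.smul_right c)
  have hAB : A * B = ((‖B‖ : ℝ) : 𝕜) • (A * c • B) := by
    rw [mul_smul_comm, smul_smul, ← RCLike.ofReal_mul, mul_inv_cancel₀ hr.ne', RCLike.ofReal_one,
      one_smul]
  rw [hAB]
  exact key.smul_of_nonneg (RCLike.ofReal_nonneg.mpr hr.le)

end ContinuousLinearMap

lemma ContinuousLinearMap.IsPositive.apply_eq_zero_of_inner_eq_zero {E : Type*}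
    [NormedAddCommGroup E] [InnerProductSpace ℝ E] {T : E →L[ℝ] E} (hT : T.IsPositive) {x : E}
    (hx : ⟪T x, x⟫_ℝ = 0) : T x = 0 := by
  -- Cauchy–Schwarz for the semi-inner product `⟪T ·, ·⟫` at the pair `x, T x`
  have hcs := LinearMap.BilinForm.apply_mul_apply_le_of_forall_zero_le
    ((innerₗ E) ∘ₗ (T : E →ₗ[ℝ] E)) hT.inner_nonneg_left x (T x)
  simp only [LinearMap.comp_apply, innerₗ_apply_apply, ContinuousLinearMap.coe_coe, hx,
    zero_mul] at hcs
  rw [hT.inner_left_eq_inner_right (T x) x] at hcs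
  exact inner_self_eq_zero.mp (mul_self_eq_zero.mp (le_antisymm hcs (mul_self_nonneg _)))

section OrthogonalFacts

variable {𝕜 E : Type*} [RCLike 𝕜] [NormedAddCommGroup E] [InnerProductSpace 𝕜 E]
  {K : Submodule 𝕜 E} [K.HasOrthogonalProjection]

lemma LinearMap.apply_starProjection_of_orthogonal_le_ker {F : Type*} [AddCommGroup F]
    [Module 𝕜 F] {T : E →ₗ[𝕜] F} (h : Kᗮ ≤ LinearMap.ker T) (a : E) :
    T (K.starProjection a) = T a := by
  have := h (K.sub_starProjection_mem_orthogonal a)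
  rw [LinearMap.mem_ker, map_sub, sub_eq_zero] at this
  exact this.symm

lemma LinearMap.IsSymmetric.apply_mem_of_ker_eq_orthogonal {T : E →ₗ[𝕜] E} (hT : T.IsSymmetric)
    (h : LinearMap.ker T = Kᗮ) (a : E) : T a ∈ K := by
  rw [← K.orthogonal_orthogonal, ← h, ← hT.orthogonal_range]
  exact Submodule.le_orthogonal_orthogonal _ (LinearMap.mem_range_self T a)

lemma sum_inner_starProjection {ι : Type*} [Fintype ι] {K : ι → Submodule 𝕜 E}
    [∀ i, (K i).HasOrthogonalProjection] {v : ι → E} (hv : ∀ i, v i ∈ K i) (a : E) :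
    ∑ i, inner 𝕜 (v i) ((K i).starProjection a) = inner 𝕜 (∑ i, v i) a := by
  rw [sum_inner]
  refine sum_congr rfl fun i _ => ?_
  rw [← Submodule.inner_starProjection_left_eq_right, (K i).starProjection_eq_self_iff.mpr (hv i)]

end OrthogonalFacts

section ProductSpace

variable {H : Type*} [NormedAddCommGroup H] [InnerProductSpace ℝ H] {n : ℕ}
  {W : Fin n → H →L[ℝ] H} {Hsub : Fin n → Submodule ℝ H} {Γ Γinv : H →L[ℝ] H} {C : H → Set H}

lemma eq_zero_of_sum_inner_nonpos (hinj : Function.Injective Γinv)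
    (hpos : ∀ i, (Γinv * W i).IsPositive)
    (hker : ∀ i, LinearMap.ker (W i : H →ₗ[ℝ] H) = (Hsub i)ᗮ)
    {d : Fin n → H} (hd : ∀ i, d i ∈ Hsub i) (h : ∑ i, ⟪Γinv (W i (d i)), d i⟫ ≤ 0) :
    d = 0 := by
  have hnonneg i : 0 ≤ ⟪Γinv (W i (d i)), d i⟫ := (hpos i).inner_nonneg_left (d i)
  have hzero i : ⟪Γinv (W i (d i)), d i⟫ = 0 :=
    (sum_eq_zero_iff_of_nonneg fun i _ => hnonneg i).mp
      (le_antisymm h (sum_nonneg fun i _ => hnonneg i)) i (mem_univ i)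
  funext i
  have hW : W i (d i) = 0 :=
    hinj (((hpos i).apply_eq_zero_of_inner_eq_zero (hzero i)).trans (map_zero Γinv).symm)
  have hperp : d i ∈ (Hsub i)ᗮ := hker i ▸ hW
  exact (Submodule.orthogonal_disjoint _).le_bot ⟨hd i, hperp⟩

variable [∀ i, CompleteSpace (Hsub i)]

lemma inS_iff (hWP : ∀ i a, W i ((Hsub i).starProjection a) = W i a)
    (hsum : ∀ x : H, ∑ i, W i x = x) {x : Fin n → H} :
    InS Hsub x ↔ ∀ i, x i = (Hsub i).starProjection (∑ j, W j (x j)) := by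
  refine ⟨fun ⟨a, ha⟩ => ?_, fun h => ⟨_, h⟩⟩
  have : ∑ j, W j (x j) = a := by
    simp only [ha, Submodule.coe_orthogonalProjectionOnto_apply, hWP, hsum]
  simpa only [this, Submodule.coe_orthogonalProjectionOnto_apply] using ha

lemma forall_inS_sum_inner_eq_zero_iff {v : Fin n → H} (hv : ∀ i, v i ∈ Hsub i) :
    (∀ s, InS Hsub s → ∑ i, ⟪v i, s i⟫ = 0) ↔ ∑ i, v i = 0 := by
  constructor
  · intro h
    have := h (fun i => (Hsub i).starProjection (∑ i, v i)) ⟨_, fun i => rfl⟩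
    rwa [sum_inner_starProjection hv, inner_self_eq_zero] at this
  · rintro h s ⟨a, ha⟩
    simp only [ha, Submodule.coe_orthogonalProjectionOnto_apply]
    rw [sum_inner_starProjection hv, h, inner_zero_left]

lemma inD_iff (hWP : ∀ i a, W i ((Hsub i).starProjection a) = W i a)
    (hWmem : ∀ i a, W i a ∈ Hsub i) (hsum : ∀ x : H, ∑ i, W i x = x)
    (hΓinv : ∀ x, Γinv (Γ x) = x ∧ Γ (Γinv x) = x) (hΓinvW : ∀ i a, Γinv (W i a) = W i (Γinv a))
    {x u : Fin n → H} :
    InD W Hsub Γ C x u ↔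
      (∀ i, u i ∈ Hsub i) ∧ InS Hsub x ∧ ∃ c ∈ C (∑ i, W i (x i)), ∑ i, W i (u i) = Γ c := by
  have hmem i a : Γinv (W i a) ∈ Hsub i := hΓinvW i a ▸ hWmem i _
  constructor
  · rintro ⟨w, ⟨c, hc, nv, ⟨hx, hnv⟩, hw⟩, hu⟩
    have hnvmem i : nv i ∈ Hsub i := by
      have : nv i = Γinv (W i (u i)) - W i c := by
        rw [(hu i).2, (hΓinv _).1, hw i, Submodule.coe_orthogonalProjectionOnto_apply, hWP]
        abel
      exact this ▸ sub_mem (hmem i _) (hWmem i c)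
    have hnv0 := (forall_inS_sum_inner_eq_zero_iff hnvmem).mp hnv
    refine ⟨fun i => (hu i).1, hx, c, hc, ?_⟩
    simp only [fun i => (hu i).2, hw, ← map_sum, sum_add_distrib, hnv0, add_zero,
      Submodule.coe_orthogonalProjectionOnto_apply, hWP, hsum]
  · rintro ⟨hu, hx, c, hc, hcu⟩
    refine ⟨fun i => Γinv (W i (u i)),
      ⟨c, hc, fun i => Γinv (W i (u i)) - W i c, ⟨hx, ?_⟩, fun i => ?_⟩,
      fun i => ⟨hu i, (hΓinv _).2.symm⟩⟩
    · rw [forall_inS_sum_inner_eq_zero_iff fun i => sub_mem (hmem i _) (hWmem i c),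
        sum_sub_distrib, ← map_sum, hcu, (hΓinv c).1, hsum, sub_self]
    · rw [Submodule.coe_orthogonalProjectionOnto_apply, hWP]
      exact (add_sub_cancel _ _).symm

lemma sum_inner_sub_nonneg_of_inD (hWP : ∀ i a, W i ((Hsub i).starProjection a) = W i a)
    (hWmem : ∀ i a, W i a ∈ Hsub i) (hsum : ∀ x : H, ∑ i, W i x = x)
    (hΓinv : ∀ x, Γinv (Γ x) = x ∧ Γ (Γinv x) = x) (hΓinvW : ∀ i a, Γinv (W i a) = W i (Γinv a))
    (hC : IsMonotoneOp C) {x u y v : Fin n → H}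
    (hu : InD W Hsub Γ C x u) (hv : InD W Hsub Γ C y v) :
    0 ≤ ∑ i, ⟪Γinv (W i (u i - v i)), x i - y i⟫ := by
  obtain ⟨-, hx, c, hc, hcu⟩ := (inD_iff hWP hWmem hsum hΓinv hΓinvW).mp hu
  obtain ⟨-, hy, c', hc', hcv⟩ := (inD_iff hWP hWmem hsum hΓinv hΓinvW).mp hv
  rw [inS_iff hWP hsum] at hx hy
  have hmem i : Γinv (W i (u i - v i)) ∈ Hsub i := hΓinvW i _ ▸ hWmem i _
  calc 0 ≤ ⟪c - c', ∑ i, W i (x i) - ∑ i, W i (y i)⟫ := hC hc hc'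
    _ = ∑ i, ⟪Γinv (W i (u i - v i)),
          (Hsub i).starProjection (∑ j, W j (x j) - ∑ j, W j (y j))⟫ := by
      rw [sum_inner_starProjection hmem, ← map_sum]
      simp only [map_sub, sum_sub_distrib, hcu, hcv, (hΓinv _).1]
    _ = ∑ i, ⟪Γinv (W i (u i - v i)), x i - y i⟫ := by
      simp only [map_sub, ← hx, ← hy]

lemma inD_sub_iff_eq_starProjection (hWP : ∀ i a, W i ((Hsub i).starProjection a) = W i a)
    (hWmem : ∀ i a, W i a ∈ Hsub i) (hsum : ∀ x : H, ∑ i, W i x = x)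
    (hΓinv : ∀ x, Γinv (Γ x) = x ∧ Γ (Γinv x) = x) (hΓinvW : ∀ i a, Γinv (W i a) = W i (Γinv a))
    {J : H → H} (hJ : ∀ p q, J p = q ↔ ∃ c ∈ C q, p = q + Γ c)
    {z x : Fin n → H} (hz : ∀ i, z i ∈ Hsub i) :
    ((∀ i, x i ∈ Hsub i) ∧ InD W Hsub Γ C x (fun i => z i - x i)) ↔
      ∀ i, x i = (Hsub i).starProjection (J (∑ j, W j (z j))) := by
  have hres : (∃ c ∈ C (∑ i, W i (x i)), ∑ i, W i (z i - x i) = Γ c) ↔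
      J (∑ j, W j (z j)) = ∑ i, W i (x i) := by
    simp only [hJ, map_sub, sum_sub_distrib, sub_eq_iff_eq_add']
  rw [inD_iff hWP hWmem hsum hΓinv hΓinvW, hres]
  constructor
  · rintro ⟨-, -, hx, hJx⟩
    rw [hJx]
    exact (inS_iff hWP hsum).mp hx
  · intro hx
    have hxmem i : x i ∈ Hsub i := hx i ▸ Submodule.starProjection_apply_mem _ _
    have hJx : J (∑ j, W j (z j)) = ∑ i, W i (x i) := by
      simp only [hx, hWP, hsum]
    exact ⟨hxmem, fun i => sub_mem (hz i) (hxmem i), (inS_iff hWP hsum).mpr (hJx ▸ hx), hJx⟩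

lemma inD_of_forall_sum_inner_nonneg (hWP : ∀ i a, W i ((Hsub i).starProjection a) = W i a)
    (hWmem : ∀ i a, W i a ∈ Hsub i) (hsum : ∀ x : H, ∑ i, W i x = x)
    (hker : ∀ i, LinearMap.ker (W i : H →ₗ[ℝ] H) = (Hsub i)ᗮ)
    (hΓinv : ∀ x, Γinv (Γ x) = x ∧ Γ (Γinv x) = x) (hΓinvW : ∀ i a, Γinv (W i a) = W i (Γinv a))
    (hpos : ∀ i, (Γinv * W i).IsPositive)
    {J : H → H} (hJ : ∀ p q, J p = q ↔ ∃ c ∈ C q, p = q + Γ c)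
    {x u : Fin n → H} (hx : ∀ i, x i ∈ Hsub i) (hu : ∀ i, u i ∈ Hsub i)
    (h : ∀ y v : Fin n → H, (∀ i, y i ∈ Hsub i) → InD W Hsub Γ C y v →
      0 ≤ ∑ i, ⟪Γinv (W i (u i - v i)), x i - y i⟫) :
    InD W Hsub Γ C x u := by
  set z : Fin n → H := fun i => x i + u i
  set y : Fin n → H := fun i => (Hsub i).starProjection (J (∑ j, W j (z j)))
  obtain ⟨hy, hyz⟩ := (inD_sub_iff_eq_starProjection hWP hWmem hsum hΓinv hΓinvW hJ
    (z := z) (x := y) fun i => add_mem (hx i) (hu i)).mpr fun i => rfl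
  have hxy : (fun i => x i - y i) = 0 := by
    refine eq_zero_of_sum_inner_nonpos (fun a b hab => ?_) hpos hker
      (fun i => sub_mem (hx i) (hy i)) ?_
    · simpa [(hΓinv _).2] using congrArg Γ hab
    · have := h y _ hy hyz
      simp only [z, show ∀ i, u i - (x i + u i - y i) = -(x i - y i) by intro i; abel,
        map_neg, inner_neg_left, sum_neg_distrib] at this
      linarith
  have hyx : y = x := funext fun i => (sub_eq_zero.mp (congrFun hxy i)).symm
  rw [hyx] at hyz
  convert hyz using 2 with i
  simp only [z, add_sub_cancel_left]

end ProductSpace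

theorem Cbold_max_monotone_and_resolvent_general
    {H : Type*} [NormedAddCommGroup H] [InnerProductSpace ℝ H] [CompleteSpace H]
    (n : ℕ) (W : Fin n → H →L[ℝ] H) (Hsub : Fin n → Submodule ℝ H)
    [∀ i, CompleteSpace (Hsub i)]
    (hWsa : ∀ i, IsSelfAdjoint (W i))
    (hWpos : ∀ i, ∀ x, 0 ≤ ⟪W i x, x⟫)
    (hker : ∀ i, LinearMap.ker (W i : H →ₗ[ℝ] H) = (Hsub i)ᗮ)
    (hsum : ∀ x : H, ∑ i, W i x = x)
    (Γ Γinv : H →L[ℝ] H) (hΓsa : IsSelfAdjoint Γ)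
    (hΓpos : ∃ c : ℝ, 0 < c ∧ ∀ x, c * ‖x‖ ^ 2 ≤ ⟪Γ x, x⟫)
    (hΓinv : ∀ x, Γinv (Γ x) = x ∧ Γ (Γinv x) = x)
    (hcomm : ∀ i, ∀ x, Γ (W i x) = W i (Γ x))
    (C : H → Set H) (hCmax : IsMaxMonotoneOp C)
    (JΓC : H → H)
    (hJΓC : ∀ p q, JΓC p = q ↔ ∃ c ∈ C q, p = q + Γ c) :
    -- monotone in H_{Γ⁻¹W}
    (∀ x u y v : Fin n → H, (∀ i, x i ∈ Hsub i) → (∀ i, y i ∈ Hsub i) →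
      InD W Hsub Γ C x u → InD W Hsub Γ C y v →
      0 ≤ ∑ i, ⟪Γinv (W i (u i - v i)), x i - y i⟫) ∧
    -- maximal in H_{Γ⁻¹W}
    (∀ x u : Fin n → H, (∀ i, x i ∈ Hsub i) → (∀ i, u i ∈ Hsub i) →
      (∀ y v : Fin n → H, (∀ i, y i ∈ Hsub i) → InD W Hsub Γ C y v →
        0 ≤ ∑ i, ⟪Γinv (W i (u i - v i)), x i - y i⟫) →
      InD W Hsub Γ C x u) ∧
    -- resolvent identity J_{W⁻¹Γ𝐂} = Σ* ∘ J_{ΓC} ∘ Σ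
    (∀ z x : Fin n → H, (∀ i, z i ∈ Hsub i) →
      (((∀ i, x i ∈ Hsub i) ∧ InD W Hsub Γ C x (fun i => z i - x i)) ↔
        ∀ i, x i = ((Hsub i).orthogonalProjectionOnto (JΓC (∑ j, W j (z j))) : H))) := by
  have hWP i a : W i ((Hsub i).starProjection a) = W i a :=
    (W i : H →ₗ[ℝ] H).apply_starProjection_of_orthogonal_le_ker (hker i).ge a
  have hWmem i a : W i a ∈ Hsub i :=
    (hWsa i).isSymmetric.apply_mem_of_ker_eq_orthogonal (hker i) a
  have hΓinvW i a : Γinv (W i a) = W i (Γinv a) := by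
    rw [← (hΓinv (W i (Γinv a))).1, hcomm, (hΓinv a).2]
  have hpos i : (Γinv * W i).IsPositive := by
    obtain ⟨c, hc, hcΓ⟩ := hΓpos
    have hΓ : Γ.IsPositive :=
      (Γ.isPositive_iff').mpr ⟨hΓsa, fun x => (by positivity : 0 ≤ c * ‖x‖ ^ 2).trans (hcΓ x)⟩
    exact (hΓ.of_inverse (fun x => (hΓinv x).1) fun x => (hΓinv x).2).mul_of_commute
      ((W i).isPositive_iff'.mpr ⟨hWsa i, hWpos i⟩) (ContinuousLinearMap.ext (hΓinvW i))
  exact ⟨fun x u y v _ _ hu hv =>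
      sum_inner_sub_nonneg_of_inD hWP hWmem hsum hΓinv hΓinvW hCmax.1 hu hv,
    fun x u hx hu h =>
      inD_of_forall_sum_inner_nonneg hWP hWmem hsum hker hΓinv hΓinvW hpos hJΓC hx hu h,
    fun z x hz => inD_sub_iff_eq_starProjection hWP hWmem hsum hΓinv hΓinvW hJΓC hz⟩

/-- W⁻¹Γ𝐂 is maximally monotone in 𝐇 = ∏ᵢHᵢ endowed with
⟨·,·⟩_{Γ⁻¹W}, and its resolvent is J_{W⁻¹Γ𝐂} = Σ* ∘ J_{ΓC} ∘ Σ. -/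
theorem Cbold_max_monotone_and_resolvent
    {H : Type*} [NormedAddCommGroup H] [InnerProductSpace ℝ H] [CompleteSpace H]
    (n : ℕ) (W : Fin n → H →L[ℝ] H) (Hsub : Fin n → Submodule ℝ H)
    [∀ i, CompleteSpace (Hsub i)]
    (hWsa : ∀ i, IsSelfAdjoint (W i))
    (hWpos : ∀ i, ∀ x, 0 ≤ ⟪W i x, x⟫)
    (hker : ∀ i, LinearMap.ker (W i : H →ₗ[ℝ] H) = (Hsub i)ᗮ)
    (hWstrong : ∀ i, ∃ c : ℝ, 0 < c ∧ ∀ x ∈ Hsub i, c * ‖x‖ ^ 2 ≤ ⟪W i x, x⟫)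
    (hsum : ∀ x : H, ∑ i, W i x = x)
    (Γ Γinv : H →L[ℝ] H) (hΓsa : IsSelfAdjoint Γ)
    (hΓpos : ∃ c : ℝ, 0 < c ∧ ∀ x, c * ‖x‖ ^ 2 ≤ ⟪Γ x, x⟫)
    (hΓinv : ∀ x, Γinv (Γ x) = x ∧ Γ (Γinv x) = x)
    (hΓH : ∀ i, ∀ x ∈ Hsub i, Γ x ∈ Hsub i)
    (hcomm : ∀ i, ∀ x, Γ (W i x) = W i (Γ x))
    (C : H → Set H) (hCmax : IsMaxMonotoneOp C)
    (JΓC : H → H)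
    (hJΓC : ∀ p q, JΓC p = q ↔ ∃ c ∈ C q, p = q + Γ c) :
    -- monotone in H_{Γ⁻¹W}
    (∀ x u y v : Fin n → H, (∀ i, x i ∈ Hsub i) → (∀ i, y i ∈ Hsub i) →
      InD W Hsub Γ C x u → InD W Hsub Γ C y v →
      0 ≤ ∑ i, ⟪Γinv (W i (u i - v i)), x i - y i⟫) ∧
    -- maximal in H_{Γ⁻¹W}
    (∀ x u : Fin n → H, (∀ i, x i ∈ Hsub i) → (∀ i, u i ∈ Hsub i) →
      (∀ y v : Fin n → H, (∀ i, y i ∈ Hsub i) → InD W Hsub Γ C y v →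
        0 ≤ ∑ i, ⟪Γinv (W i (u i - v i)), x i - y i⟫) →
      InD W Hsub Γ C x u) ∧
    -- resolvent identity J_{W⁻¹Γ𝐂} = Σ* ∘ J_{ΓC} ∘ Σ
    (∀ z x : Fin n → H, (∀ i, z i ∈ Hsub i) →
      (((∀ i, x i ∈ Hsub i) ∧ InD W Hsub Γ C x (fun i => z i - x i)) ↔
        ∀ i, x i = ((Hsub i).orthogonalProjectionOnto (JΓC (∑ j, W j (z j))) : H))) :=
  Cbold_max_monotone_and_resolvent_general n W Hsub hWsa hWpos hker hsum Γ Γinv hΓsa hΓpos hΓinv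
    hcomm C hCmax JΓC hJΓC
end

section
/- Let A : H → 2^H be maximally monotone, Γ ∈ 𝔖₊₊(H) such that A = P_{H₁}AP_{H₁} and Γ(H₁) ⊆ H₁, and W ∈ 𝔖₊(H) with ker W = H₁^⊥, W|_{H₁} strongly positive, commuting with Γ. Then for x ∈ H and z ∈ H₁, the condition W(x − ΓBx − z) ∈ ΓAx is equivalent to P_{H₁}x = J_{W^{-1}ΓA}(P_{H₁}(2x − ΓBx) − z), where J_{W^{-1}ΓA} is the resolvent of W^{-1}ΓA restricted to H₁. -/
open RealInnerProductSpace

/-!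
Since `ker W = H₁ᗮ`, the operator `W` only sees the `H₁`-component of its argument, and
`A = P_{H₁} A P_{H₁}` only sees `P_{H₁} x`. Hence, for `p = P_{H₁}(2x − ΓBx) − z` and
`ξ = P_{H₁} x`, the resolvent equation `W (p − ξ) ∈ Γ A ξ` is literally the inclusion
`W (x − ΓBx − z) ∈ Γ A x`.
-/

theorem apply_idempotent_eq_of_forall_eq_image {α β : Type*} {p : α → α}
    (hp : ∀ x, p (p x) = p x) {g : β → β} {A : α → Set β}
    (hA : ∀ x, A x = g '' A (p x)) (x : α) : A (p x) = A x := by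
  rw [hA (p x), hp, ← hA]

theorem Submodule.map_orthogonalProjectionOnto_eq_of_orthogonal_le_ker
    {H F : Type*} [NormedAddCommGroup H] [InnerProductSpace ℝ H] [AddCommGroup F] [Module ℝ F]
    (K : Submodule ℝ H) [K.HasOrthogonalProjection] (f : H →ₗ[ℝ] F)
    (hf : Kᗮ ≤ LinearMap.ker f) (y : H) : f (K.orthogonalProjectionOnto y) = f y := by
  have hperp : y - (K.orthogonalProjectionOnto y : H) ∈ LinearMap.ker f :=
    hf (K.sub_starProjection_mem_orthogonal y)
  rw [LinearMap.mem_ker, map_sub, sub_eq_zero] at hperp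
  exact hperp.symm

theorem coordinatewise_fixed_point_characterization_general
    {H : Type*} [NormedAddCommGroup H] [InnerProductSpace ℝ H]
    (H₁ : Submodule ℝ H) [CompleteSpace H₁]
    (A : H → Set H)
    (hA1 : ∀ x : H, A x =
      (fun u => (Submodule.orthogonalProjectionOnto H₁ u : H)) ''
        A ((Submodule.orthogonalProjectionOnto H₁ x : H)))
    (B : H → H)
    (Γ : H →L[ℝ] H)
    (W : H →L[ℝ] H)
    (hker : LinearMap.ker (W : H →ₗ[ℝ] H) = H₁ᗮ)
    (J : H → H)
    (hJ : ∀ p ξ, J p = ξ ↔ ξ ∈ H₁ ∧ ∃ a ∈ A ξ, W (p - ξ) = Γ a)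
    (x : H) (z : H) :
    (∃ a ∈ A x, W (x - Γ (B x) - z) = Γ a) ↔
    (Submodule.orthogonalProjectionOnto H₁ x : H) =
      J ((Submodule.orthogonalProjectionOnto H₁ (2 • x - Γ (B x)) : H) - z) := by
  have hWP : ∀ y : H, W (H₁.orthogonalProjectionOnto y) = W y :=
    H₁.map_orthogonalProjectionOnto_eq_of_orthogonal_le_ker (W : H →ₗ[ℝ] H) hker.ge
  have hAP : A (H₁.orthogonalProjectionOnto x) = A x :=
    apply_idempotent_eq_of_forall_eq_image
      (fun y => congrArg Subtype.val (H₁.orthogonalProjectionOnto_mem_subspace_eq_self _)) hA1 x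
  have hres : W ((H₁.orthogonalProjectionOnto (2 • x - Γ (B x)) : H) - z -
      H₁.orthogonalProjectionOnto x) = W (x - Γ (B x) - z) := by
    rw [map_sub, map_sub, hWP, hWP, ← map_sub, ← map_sub]
    congr 1
    abel
  rw [eq_comm, hJ, hAP, hres]
  exact (and_iff_right (SetLike.coe_mem _)).symm

/-- the coordinate-wise fixed-point characterization of the
preconditioned forward-Douglas–Rachford: for x ∈ H and z ∈ H₁,
`W(x − ΓBx − z) ∈ ΓAx` is equivalent to
`P_{H₁}x = J_{W⁻¹ΓA}(P_{H₁}(2x − ΓBx) − z)`. -/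
theorem coordinatewise_fixed_point_characterization
    {H : Type*} [NormedAddCommGroup H] [InnerProductSpace ℝ H] [CompleteSpace H]
    (H₁ : Submodule ℝ H) [CompleteSpace H₁]
    (A : H → Set H) (hA : IsMaxMonotoneOp A)
    (hA1 : ∀ x : H, A x =
      (fun u => (Submodule.orthogonalProjectionOnto H₁ u : H)) ''
        A ((Submodule.orthogonalProjectionOnto H₁ x : H)))
    (B : H → H)
    (Γ : H →L[ℝ] H) (hΓsa : IsSelfAdjoint Γ)
    (hΓpos : ∃ c : ℝ, 0 < c ∧ ∀ x, c * ‖x‖ ^ 2 ≤ ⟪Γ x, x⟫)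
    (hΓH : ∀ x ∈ H₁, Γ x ∈ H₁)
    (W : H →L[ℝ] H) (hWsa : IsSelfAdjoint W)
    (hWpos : ∀ x, 0 ≤ ⟪W x, x⟫)
    (hker : LinearMap.ker (W : H →ₗ[ℝ] H) = H₁ᗮ)
    (hWstrong : ∃ c : ℝ, 0 < c ∧ ∀ x ∈ H₁, c * ‖x‖ ^ 2 ≤ ⟪W x, x⟫)
    (hcomm : ∀ x, Γ (W x) = W (Γ x))
    (J : H → H)
    (hJ : ∀ p ξ, J p = ξ ↔ ξ ∈ H₁ ∧ ∃ a ∈ A ξ, W (p - ξ) = Γ a)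
    (x : H) (z : H) (hz : z ∈ H₁) :
    (∃ a ∈ A x, W (x - Γ (B x) - z) = Γ a) ↔
    (Submodule.orthogonalProjectionOnto H₁ x : H) =
      J ((Submodule.orthogonalProjectionOnto H₁ (2 • x - Γ (B x)) : H) - z) :=
  coordinatewise_fixed_point_characterization_general H₁ A hA1 B Γ W hker J hJ x z
end

section
/- Let T : H → H be α-averaged for α ∈ (0,1), with fix T ≠ ∅. Given z₀ ∈ H, errors dₖ with ∑ₖ ρₖ‖dₖ‖ < ∞, and relaxations ρₖ ∈ (0, 1/α) with ∑ₖ ρₖ(1/α − ρₖ) = +∞, the sequence zₖ₊₁ = zₖ + ρₖ(Tzₖ − zₖ + dₖ) converges weakly to a fixed point of T. -/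
/-!
With `μₖ = αρₖ ∈ (0, 1)` and `eₖ = ρₖdₖ` the recursion reads `zₖ₊₁ = zₖ + μₖ(Rzₖ − zₖ) + eₖ`, a
Krasnosel'skii–Mann iteration for the nonexpansive `R`, whose fixed points are those of `T`.
For a fixed point `q`, `‖zₖ₊₁ − eₖ − q‖² ≤ ‖zₖ − q‖² − μₖ(1 − μₖ)‖Rzₖ − zₖ‖²`, so `‖zₖ − q‖`
converges and `∑ μₖ(1 − μₖ)‖Rzₖ − zₖ‖² < ∞`. The displacement `‖Rzₖ − zₖ‖` is itself
decreasing up to summable errors, and `∑ μₖ(1 − μₖ) = ∞` forces its limit to be `0`. Hence every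
weak cluster point of `(zₖ)` (taken along an ultrafilter, where a bounded sequence has a weak limit
by Riesz representation) is a fixed point, and Opial's argument shows there is only one.
-/

open RealInnerProductSpace Filter Topology Function

theorem exists_tendsto_and_summable_of_le_sub_add {a s e : ℕ → ℝ} (ha : BddBelow (Set.range a))
    (hs : ∀ k, 0 ≤ s k) (he : Summable e) (h : ∀ k, a (k + 1) ≤ a k - s k + e k) :
    (∃ l, Tendsto a atTop (𝓝 l)) ∧ Summable s := by
  set c : ℕ → ℝ := fun n => a n - ∑ k ∈ Finset.range n, e k with hc
  have hstep : ∀ n, c (n + 1) + s n ≤ c n := fun n => by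
    simp only [hc, Finset.sum_range_succ]; linarith [h n]
  have hanti : Antitone c := antitone_nat_of_succ_le fun n => by linarith [hstep n, hs n]
  have hpartial := he.hasSum.tendsto_sum_nat
  obtain ⟨m, hm⟩ := ha
  obtain ⟨E, hE⟩ := hpartial.bddAbove_range
  have hc_bdd : BddBelow (Set.range c) :=
    ⟨m - E, by rintro _ ⟨n, rfl⟩; linarith [hm ⟨n, rfl⟩, hE ⟨n, rfl⟩]⟩
  have hc_lim := tendsto_atTop_ciInf hanti hc_bdd
  have hs_sum : ∀ n, ∑ k ∈ Finset.range n, s k ≤ c 0 - c n := by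
    intro n
    induction n with
    | zero => simp
    | succ n ih => rw [Finset.sum_range_succ]; linarith [hstep n]
  refine ⟨⟨_, by simpa [hc] using hc_lim.add hpartial⟩,
    summable_of_sum_range_le (c := c 0 - ⨅ i, c i) hs fun n => ?_⟩
  linarith [hs_sum n, hanti.le_of_tendsto hc_lim n]

theorem summable_of_summable_mul_of_tendsto_pos {c f : ℕ → ℝ} {L : ℝ} (hc : ∀ k, 0 ≤ c k)
    (hf : Tendsto f atTop (𝓝 L)) (hL : 0 < L) (hcf : Summable fun k => c k * f k) :
    Summable c := by
  refine Summable.of_norm_bounded_eventually_nat (hcf.mul_left (2 / L)) ?_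
  filter_upwards [hf.eventually (eventually_gt_nhds (half_lt_self hL))] with k hk
  rw [Real.norm_of_nonneg (hc k), ← mul_assoc, mul_comm (2 / L), mul_assoc]
  calc c k = c k * (2 / L * (L / 2)) := by field_simp
    _ ≤ c k * (2 / L * f k) := by gcongr; exact hc k

theorem norm_sub_le_norm_sub_sub_add_norm {E : Type*} [SeminormedAddCommGroup E] (x y q : E) :
    ‖x - q‖ ≤ ‖x - y - q‖ + ‖y‖ := by
  simpa [sub_right_comm x y q] using norm_add_le (x - y - q) y

section InnerProductSpace

variable {H : Type*} [NormedAddCommGroup H] [InnerProductSpace ℝ H]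

def TendstoWeakly (z : ℕ → H) (l : Filter ℕ) (x : H) : Prop :=
  ∀ y, Tendsto (fun k => ⟪z k, y⟫) l (𝓝 ⟪x, y⟫)

theorem exists_tendstoWeakly_of_norm_le [CompleteSpace H] {z : ℕ → H} {M : ℝ}
    (hz : ∀ k, ‖z k‖ ≤ M) (V : Ultrafilter ℕ) : ∃ x, TendstoWeakly z (V : Filter ℕ) x := by
  have hbound : ∀ y k, |⟪z k, y⟫| ≤ M * ‖y‖ := fun y k =>
    (abs_real_inner_le_norm _ _).trans (mul_le_mul_of_nonneg_right (hz k) (norm_nonneg y))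
  have hlim : ∀ y, ∃ c, Tendsto (fun k => ⟪z k, y⟫) V (𝓝 c) := fun y => by
    obtain ⟨c, -, hc⟩ := (isCompact_Icc (a := -(M * ‖y‖)) (b := M * ‖y‖)).ultrafilter_le_nhds
      (V.map fun k => ⟪z k, y⟫) (by
        rw [le_principal_iff, Ultrafilter.coe_map, mem_map]
        exact univ_mem' fun k => abs_le.1 (hbound y k))
    exact ⟨c, hc⟩
  choose g hg using hlim
  let G : H →ₗ[ℝ] ℝ :=
    { toFun := g
      map_add' := fun y y' => tendsto_nhds_unique (hg (y + y'))
        (by simpa only [inner_add_right] using (hg y).add (hg y'))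
      map_smul' := fun r y => tendsto_nhds_unique (hg (r • y))
        (by simpa [real_inner_smul_right] using (hg y).const_mul r) }
  have hG : ∀ y, ‖G y‖ ≤ M * ‖y‖ := fun y => le_of_tendsto' (hg y).abs (hbound y)
  refine ⟨(InnerProductSpace.toDual ℝ H).symm (G.mkContinuous M hG), fun y => ?_⟩
  rw [InnerProductSpace.toDual_symm_apply]
  exact hg y

theorem isFixedPt_of_tendstoWeakly {R : H → H} (hR : LipschitzWith 1 R) {z : ℕ → H} {M : ℝ}
    (hz : ∀ k, ‖z k‖ ≤ M) {l : Filter ℕ} [l.NeBot] {x : H} (hx : TendstoWeakly z l x)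
    (hRz : Tendsto (fun k => ‖R (z k) - z k‖) l (𝓝 0)) : IsFixedPt R x := by
  set C := M + ‖x‖
  have hdiff : Tendsto (fun k => ‖z k - R x‖ ^ 2 - ‖z k - x‖ ^ 2) l (𝓝 (‖x - R x‖ ^ 2)) := by
    have hexp : ∀ k, ‖z k - R x‖ ^ 2 - ‖z k - x‖ ^ 2
        = 2 * (⟪z k, x - R x⟫ - ⟪x, x - R x⟫) + ‖x - R x‖ ^ 2 := fun k => by
      rw [show z k - R x = (z k - x) + (x - R x) by abel, norm_add_sq_real, inner_sub_left]
      ring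
    simpa [hexp] using
      (((hx (x - R x)).sub_const ⟪x, x - R x⟫).const_mul 2).add_const (‖x - R x‖ ^ 2)
  have hle : ∀ k, ‖z k - R x‖ ^ 2 - ‖z k - x‖ ^ 2
      ≤ ‖R (z k) - z k‖ ^ 2 + 2 * C * ‖R (z k) - z k‖ := fun k => by
    have h₁ : ‖z k - R x‖ ≤ ‖R (z k) - z k‖ + ‖z k - x‖ :=
      calc ‖z k - R x‖ ≤ ‖z k - R (z k)‖ + ‖R (z k) - R x‖ :=
            norm_sub_le_norm_sub_add_norm_sub _ _ _
        _ ≤ ‖R (z k) - z k‖ + ‖z k - x‖ := by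
          rw [norm_sub_rev]; simpa using hR.norm_sub_le (z k) x
    have h₂ : ‖z k - x‖ ≤ C := by linarith [norm_sub_le (z k) x, hz k]
    nlinarith [norm_nonneg (z k - R x), norm_nonneg (z k - x), norm_nonneg (R (z k) - z k)]
  have hsq : ‖x - R x‖ ^ 2 ≤ 0 := le_of_tendsto_of_tendsto' hdiff
    (by simpa using (hRz.pow 2).add (hRz.const_mul (2 * C))) hle
  have : x - R x = 0 := by
    rw [← norm_eq_zero]; nlinarith [norm_nonneg (x - R x)]
  exact (sub_eq_zero.1 this).symm

theorem eq_of_tendstoWeakly_of_tendsto_norm_sub {z : ℕ → H} {l₁ l₂ : Filter ℕ} [l₁.NeBot]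
    [l₂.NeBot] (h₁ : l₁ ≤ atTop) (h₂ : l₂ ≤ atTop) {x₁ x₂ : H} {L₁ L₂ : ℝ}
    (hd₁ : Tendsto (fun k => ‖z k - x₁‖) atTop (𝓝 L₁))
    (hd₂ : Tendsto (fun k => ‖z k - x₂‖) atTop (𝓝 L₂))
    (hx₁ : TendstoWeakly z l₁ x₁) (hx₂ : TendstoWeakly z l₂ x₂) : x₁ = x₂ := by
  -- `⟪zₖ, x₁ - x₂⟫` is an affine function of `‖zₖ - x₂‖² - ‖zₖ - x₁‖²`, which converges
  have hexp : ∀ k, ⟪z k, x₁ - x₂⟫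
      = (‖z k - x₂‖ ^ 2 - ‖z k - x₁‖ ^ 2 + ‖x₁‖ ^ 2 - ‖x₂‖ ^ 2) / 2 := fun k => by
    rw [norm_sub_sq_real, norm_sub_sq_real, inner_sub_right]; ring
  have hlim : Tendsto (fun k => ⟪z k, x₁ - x₂⟫) atTop
      (𝓝 ((L₂ ^ 2 - L₁ ^ 2 + ‖x₁‖ ^ 2 - ‖x₂‖ ^ 2) / 2)) := by
    simp only [hexp]
    exact ((((hd₂.pow 2).sub (hd₁.pow 2)).add_const _).sub_const _).div_const 2
  have hinner : ⟪x₁ - x₂, x₁ - x₂⟫ = 0 := by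
    rw [inner_sub_left, tendsto_nhds_unique (hx₁ _) (hlim.mono_left h₁),
      tendsto_nhds_unique (hx₂ _) (hlim.mono_left h₂), sub_self]
  exact sub_eq_zero.1 (inner_self_eq_zero.1 hinner)

theorem exists_tendstoWeakly_of_tendsto_norm_sub {z : ℕ → H} {F : Set H}
    (hF : ∀ q ∈ F, ∃ L, Tendsto (fun k => ‖z k - q‖) atTop (𝓝 L))
    (hclust : ∀ V : Ultrafilter ℕ, (V : Filter ℕ) ≤ atTop →
      ∃ x ∈ F, TendstoWeakly z (V : Filter ℕ) x) :
    ∃ p ∈ F, TendstoWeakly z atTop p := by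
  obtain ⟨U, hU⟩ := Ultrafilter.exists_le (atTop : Filter ℕ)
  obtain ⟨p, hpF, hp⟩ := hclust U hU
  refine ⟨p, hpF, fun y => (tendsto_iff_ultrafilter _ _ _).2 fun V hV => ?_⟩
  obtain ⟨x, hxF, hx⟩ := hclust V hV
  obtain ⟨L, hL⟩ := hF p hpF
  obtain ⟨L', hL'⟩ := hF x hxF
  rw [eq_of_tendstoWeakly_of_tendsto_norm_sub hU hV hL hL' hp hx]
  exact hx y

theorem norm_add_smul_sub_sub_sq_le {u v q : H} {t : ℝ} (ht : 0 ≤ t) (hv : ‖v - q‖ ≤ ‖u - q‖) :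
    ‖u + t • (v - u) - q‖ ^ 2 ≤ ‖u - q‖ ^ 2 - t * (1 - t) * ‖v - u‖ ^ 2 := by
  have hid : ‖u + t • (v - u) - q‖ ^ 2
      = (1 - t) * ‖u - q‖ ^ 2 + t * ‖v - q‖ ^ 2 - t * (1 - t) * ‖v - u‖ ^ 2 := by
    rw [show u + t • (v - u) - q = (u - q) + t • ((v - q) - (u - q)) by module,
      show v - u = (v - q) - (u - q) by abel]
    simp only [← real_inner_self_eq_norm_sq, inner_add_left, inner_add_right, inner_sub_left,
      inner_sub_right, real_inner_smul_left, real_inner_smul_right, real_inner_comm (u - q)]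
    ring
  rw [hid]
  nlinarith [pow_le_pow_left₀ (norm_nonneg _) hv 2]

theorem isFixedPt_iff_of_eq_add_smul {T R : H → H} {α : ℝ} (hα : α ≠ 0)
    (hT : ∀ x, T x = (1 - α) • x + α • R x) (p : H) : IsFixedPt T p ↔ IsFixedPt R p := by
  rw [IsFixedPt, IsFixedPt, ← sub_eq_zero, ← sub_eq_zero (a := R p),
    show T p - p = α • (R p - p) by rw [hT]; module, smul_eq_zero, or_iff_right hα]

structure IsKrasnoselskiiMannSeq (R : H → H) (μ : ℕ → ℝ) (e z : ℕ → H) : Prop where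
  mem_Icc : ∀ k, μ k ∈ Set.Icc (0 : ℝ) 1
  succ : ∀ k, z (k + 1) = z k + μ k • (R (z k) - z k) + e k

namespace IsKrasnoselskiiMannSeq

variable {R : H → H} {μ : ℕ → ℝ} {e z : ℕ → H} {q : H}

theorem norm_sub_sq_succ_le (hz : IsKrasnoselskiiMannSeq R μ e z) (hR : LipschitzWith 1 R)
    (hq : IsFixedPt R q) (k : ℕ) :
    ‖z (k + 1) - e k - q‖ ^ 2 ≤ ‖z k - q‖ ^ 2 - μ k * (1 - μ k) * ‖R (z k) - z k‖ ^ 2 := by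
  rw [hz.succ k, add_sub_cancel_right]
  refine norm_add_smul_sub_sub_sq_le (hz.mem_Icc k).1 ?_
  simpa [hq.eq] using hR.norm_sub_le (z k) q

theorem norm_sub_sub_succ_le (hz : IsKrasnoselskiiMannSeq R μ e z) (hR : LipschitzWith 1 R)
    (hq : IsFixedPt R q) (k : ℕ) : ‖z (k + 1) - e k - q‖ ≤ ‖z k - q‖ := by
  refine pow_le_pow_iff_left₀ (norm_nonneg _) (norm_nonneg _) two_ne_zero |>.1 ?_
  have hμ := hz.mem_Icc k
  nlinarith [hz.norm_sub_sq_succ_le hR hq k,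
    mul_nonneg (mul_nonneg hμ.1 (sub_nonneg.2 hμ.2)) (sq_nonneg ‖R (z k) - z k‖)]

theorem norm_sub_succ_le (hz : IsKrasnoselskiiMannSeq R μ e z) (hR : LipschitzWith 1 R)
    (hq : IsFixedPt R q) (k : ℕ) : ‖z (k + 1) - q‖ ≤ ‖z k - q‖ + ‖e k‖ :=
  (norm_sub_le_norm_sub_sub_add_norm _ _ _).trans
    (by gcongr; exact hz.norm_sub_sub_succ_le hR hq k)

theorem exists_tendsto_norm_sub (hz : IsKrasnoselskiiMannSeq R μ e z) (hR : LipschitzWith 1 R)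
    (he : Summable fun k => ‖e k‖) (hq : IsFixedPt R q) :
    ∃ L, Tendsto (fun k => ‖z k - q‖) atTop (𝓝 L) :=
  (exists_tendsto_and_summable_of_le_sub_add (s := 0) ⟨0, by rintro _ ⟨k, rfl⟩; positivity⟩
    (fun _ => le_rfl) he fun k => by simpa using hz.norm_sub_succ_le hR hq k).1

theorem exists_norm_sub_le (hz : IsKrasnoselskiiMannSeq R μ e z) (hR : LipschitzWith 1 R)
    (he : Summable fun k => ‖e k‖) (hq : IsFixedPt R q) : ∃ C, ∀ k, ‖z k - q‖ ≤ C := by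
  obtain ⟨L, hL⟩ := hz.exists_tendsto_norm_sub hR he hq
  obtain ⟨C, hC⟩ := hL.bddAbove_range
  exact ⟨C, fun k => hC ⟨k, rfl⟩⟩

theorem summable_mul_norm_sq (hz : IsKrasnoselskiiMannSeq R μ e z) (hR : LipschitzWith 1 R)
    (he : Summable fun k => ‖e k‖) (hq : IsFixedPt R q) :
    Summable fun k => μ k * (1 - μ k) * ‖R (z k) - z k‖ ^ 2 := by
  obtain ⟨C, hC⟩ := hz.exists_norm_sub_le hR he hq
  refine (exists_tendsto_and_summable_of_le_sub_add (a := fun k => ‖z k - q‖ ^ 2)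
    ⟨0, by rintro _ ⟨k, rfl⟩; positivity⟩ (fun k => ?_) (he.mul_left (2 * C)) fun k => ?_).2
  · have hμ := hz.mem_Icc k
    exact mul_nonneg (mul_nonneg hμ.1 (sub_nonneg.2 hμ.2)) (sq_nonneg _)
  · have h₁ := norm_sub_le_norm_sub_sub_add_norm (z (k + 1)) (e k) q
    have h₂ := hz.norm_sub_sub_succ_le hR hq k
    nlinarith [hz.norm_sub_sq_succ_le hR hq k, hC k, hC (k + 1), norm_nonneg (e k),
      norm_nonneg (z (k + 1) - e k - q), norm_nonneg (z (k + 1) - q)]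

theorem norm_displacement_succ_le (hz : IsKrasnoselskiiMannSeq R μ e z)
    (hR : LipschitzWith 1 R) (k : ℕ) :
    ‖R (z (k + 1)) - z (k + 1)‖ ≤ ‖R (z k) - z k‖ + 2 * ‖e k‖ := by
  obtain ⟨hμ₀, hμ₁⟩ := hz.mem_Icc k
  have hstep : ‖z (k + 1) - z k‖ ≤ μ k * ‖R (z k) - z k‖ + ‖e k‖ := by
    rw [hz.succ k, add_assoc, add_sub_cancel_left]
    refine (norm_add_le _ _).trans ?_
    rw [norm_smul, Real.norm_of_nonneg hμ₀]
  have hrest : ‖R (z k) - z (k + 1)‖ ≤ (1 - μ k) * ‖R (z k) - z k‖ + ‖e k‖ := by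
    rw [hz.succ k, show R (z k) - (z k + μ k • (R (z k) - z k) + e k)
      = (1 - μ k) • (R (z k) - z k) - e k by module]
    refine (norm_sub_le _ _).trans ?_
    rw [norm_smul, Real.norm_of_nonneg (sub_nonneg.2 hμ₁)]
  calc ‖R (z (k + 1)) - z (k + 1)‖ ≤ ‖R (z (k + 1)) - R (z k)‖ + ‖R (z k) - z (k + 1)‖ :=
        norm_sub_le_norm_sub_add_norm_sub _ _ _
    _ ≤ ‖z (k + 1) - z k‖ + ‖R (z k) - z (k + 1)‖ := by
        gcongr; simpa using hR.norm_sub_le (z (k + 1)) (z k)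
    _ ≤ ‖R (z k) - z k‖ + 2 * ‖e k‖ := by linarith

theorem tendsto_displacement (hz : IsKrasnoselskiiMannSeq R μ e z) (hR : LipschitzWith 1 R)
    (he : Summable fun k => ‖e k‖) (hq : IsFixedPt R q)
    (hdiv : ¬ Summable fun k => μ k * (1 - μ k)) :
    Tendsto (fun k => ‖R (z k) - z k‖) atTop (𝓝 0) := by
  obtain ⟨L, hL⟩ := (exists_tendsto_and_summable_of_le_sub_add (a := fun k => ‖R (z k) - z k‖)
    (s := 0) ⟨0, by rintro _ ⟨k, rfl⟩; positivity⟩ (fun _ => le_rfl) (he.mul_left 2)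
    fun k => by simpa using hz.norm_displacement_succ_le hR k).1
  obtain rfl : L = 0 := by
    refine (ge_of_tendsto' hL fun k => norm_nonneg _).antisymm' (not_lt.1 fun hLpos => hdiv ?_)
    refine summable_of_summable_mul_of_tendsto_pos (fun k => ?_) (hL.pow 2) (pow_pos hLpos 2)
      (by simpa only [mul_assoc] using hz.summable_mul_norm_sq hR he hq)
    exact mul_nonneg (hz.mem_Icc k).1 (sub_nonneg.2 (hz.mem_Icc k).2)
  exact hL

theorem exists_tendstoWeakly [CompleteSpace H] (hz : IsKrasnoselskiiMannSeq R μ e z)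
    (hR : LipschitzWith 1 R) (he : Summable fun k => ‖e k‖) (hq : IsFixedPt R q)
    (hdiv : ¬ Summable fun k => μ k * (1 - μ k)) :
    ∃ p, IsFixedPt R p ∧ TendstoWeakly z atTop p := by
  obtain ⟨C, hC⟩ := hz.exists_norm_sub_le hR he hq
  have hbdd : ∀ k, ‖z k‖ ≤ C + ‖q‖ := fun k => by
    linarith [norm_le_norm_sub_add (z k) q, hC k]
  refine exists_tendstoWeakly_of_tendsto_norm_sub (F := fixedPoints R)
    (fun p hp => hz.exists_tendsto_norm_sub hR he hp) fun V hV => ?_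
  obtain ⟨x, hx⟩ := exists_tendstoWeakly_of_norm_le hbdd V
  exact ⟨x, isFixedPt_of_tendstoWeakly hR hbdd hx
    ((hz.tendsto_displacement hR he hq hdiv).mono_left hV), hx⟩

end IsKrasnoselskiiMannSeq

end InnerProductSpace

theorem krasnoselskii_mann_weak_convergence_general
    {H : Type*} [NormedAddCommGroup H] [InnerProductSpace ℝ H] [CompleteSpace H]
    (T : H → H) (α : ℝ) (hα0 : 0 < α)
    (havg : ∃ R : H → H, (∀ x y, ‖R x - R y‖ ≤ ‖x - y‖) ∧
      ∀ x, T x = (1 - α) • x + α • R x)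
    (hfix : ∃ p, T p = p)
    (ρ : ℕ → ℝ) (hρ : ∀ k, 0 < ρ k ∧ ρ k < 1 / α)
    (d : ℕ → H)
    (herr : Summable fun k => ρ k * ‖d k‖)
    (hdiv : ¬ Summable fun k => ρ k * (1 / α - ρ k))
    (z : ℕ → H)
    (hrec : ∀ k, z (k + 1) = z k + ρ k • (T (z k) - z k + d k)) :
    ∃ p : H, T p = p ∧
      ∀ y : H, Filter.Tendsto (fun k => ⟪z k, y⟫) Filter.atTop (nhds ⟪p, y⟫) := by
  obtain ⟨R, hR, hTR⟩ := havg
  have hfixed := isFixedPt_iff_of_eq_add_smul hα0.ne' hTR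
  obtain ⟨q, hq⟩ := hfix
  have hKM : IsKrasnoselskiiMannSeq R (fun k => α * ρ k) (fun k => ρ k • d k) z := by
    refine ⟨fun k => ⟨by nlinarith [hρ k], ?_⟩, fun k => by rw [hrec, hTR]; module⟩
    simpa [hα0.ne'] using (mul_lt_mul_of_pos_left (hρ k).2 hα0).le
  have he : Summable fun k => ‖ρ k • d k‖ := by
    simpa [norm_smul, abs_of_pos (hρ _).1] using herr
  have hdiv' : ¬ Summable fun k => α * ρ k * (1 - α * ρ k) := by
    have hμ : (fun k => α * ρ k * (1 - α * ρ k)) = fun k => α ^ 2 * (ρ k * (1 / α - ρ k)) :=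
      funext fun k => by field_simp
    rwa [hμ, summable_mul_left_iff (pow_ne_zero 2 hα0.ne')]
  obtain ⟨p, hp, hlim⟩ := hKM.exists_tendstoWeakly
    (LipschitzWith.of_dist_le_mul fun x y => by simpa [dist_eq_norm] using hR x y) he
    ((hfixed q).1 hq) hdiv'
  exact ⟨p, (hfixed p).2 hp, hlim⟩

/-- Krasnosel'skii–Mann iteration with summable errors for an
α-averaged operator with a fixed point: the iterates converge weakly to a fixed
point of T. -/
theorem krasnoselskii_mann_weak_convergence
    {H : Type*} [NormedAddCommGroup H] [InnerProductSpace ℝ H] [CompleteSpace H]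
    (T : H → H) (α : ℝ) (hα0 : 0 < α) (hα1 : α < 1)
    (havg : ∃ R : H → H, (∀ x y, ‖R x - R y‖ ≤ ‖x - y‖) ∧
      ∀ x, T x = (1 - α) • x + α • R x)
    (hfix : ∃ p, T p = p)
    (ρ : ℕ → ℝ) (hρ : ∀ k, 0 < ρ k ∧ ρ k < 1 / α)
    (d : ℕ → H)
    (herr : Summable fun k => ρ k * ‖d k‖)
    (hdiv : ¬ Summable fun k => ρ k * (1 / α - ρ k))
    (z : ℕ → H)
    (hrec : ∀ k, z (k + 1) = z k + ρ k • (T (z k) - z k + d k)) :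
    ∃ p : H, T p = p ∧
      ∀ y : H, Filter.Tendsto (fun k => ⟪z k, y⟫) Filter.atTop (nhds ⟪p, y⟫) :=
  krasnoselskii_mann_weak_convergence_general T α hα0 havg hfix ρ hρ d herr hdiv z hrec
end
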